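/- arXiv:1004.5570 — 4 statements merged into one kernel-verified Lean document; each statement's English description precedes it below -/
import Mathlib

section
/- For all integers m1, m2, θ with 1 ≤ θ ≤ m1+m2 and 0 ≤ m1 ≤ m2, the number of pairs (z1,z2) with 0 ≤ z1 ≤ m1, 0 ≤ z2 ≤ m2, θ−1 ≤ z1+z2 ≤ θ equals min(2θ+1, 2m1+2, 2(m1+m2−θ+1)+1). -/
lemma lineCard (m1 m2 s : ℤ) :
    (((Finset.Icc (0:ℤ) m1 ×ˢ Finset.Icc (0:ℤ) m2).filter
      (fun p => p.1 + p.2 = s)).card : ℤ)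
    = (min s m1 + 1 - max 0 (s - m2)).toNat := by
  have himg : ((Finset.Icc (0:ℤ) m1 ×ˢ Finset.Icc (0:ℤ) m2).filter
      (fun p => p.1 + p.2 = s))
      = (Finset.Icc (max 0 (s - m2)) (min s m1)).image (fun z => (z, s - z)) := by
    ext ⟨a, b⟩
    simp only [Finset.mem_filter, Finset.mem_product, Finset.mem_Icc,
      Finset.mem_image, Prod.mk.injEq]
    constructor
    · rintro ⟨⟨⟨ha0, ha1⟩, hb0, hb1⟩, hs⟩
      exact ⟨a, ⟨by omega, by omega⟩, rfl, by omega⟩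
    · rintro ⟨z, ⟨hz0, hz1⟩, rfl, rfl⟩
      refine ⟨⟨⟨by omega, by omega⟩, by omega, by omega⟩, by omega⟩
  rw [himg, Finset.card_image_of_injective _ (fun x y h => by
    simpa using congrArg Prod.fst h), Int.card_Icc]

theorem stmt3 (m1 m2 θ : ℤ) (h1 : 1 ≤ θ) (h2 : θ ≤ m1 + m2) (h3 : 0 ≤ m1)
    (h4 : m1 ≤ m2) :
    (((Finset.Icc (0:ℤ) m1 ×ˢ Finset.Icc (0:ℤ) m2).filter
      (fun p => θ - 1 ≤ p.1 + p.2 ∧ p.1 + p.2 ≤ θ)).card : ℤ) =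
      min (2 * θ + 1) (min (2 * m1 + 2) (2 * (m1 + m2 - θ + 1) + 1)) := by
  have hsplit : ((Finset.Icc (0:ℤ) m1 ×ˢ Finset.Icc (0:ℤ) m2).filter
      (fun p => θ - 1 ≤ p.1 + p.2 ∧ p.1 + p.2 ≤ θ))
    = ((Finset.Icc (0:ℤ) m1 ×ˢ Finset.Icc (0:ℤ) m2).filter
        (fun p => p.1 + p.2 = θ - 1))
      ∪ ((Finset.Icc (0:ℤ) m1 ×ˢ Finset.Icc (0:ℤ) m2).filter
        (fun p => p.1 + p.2 = θ)) := by
    rw [← Finset.filter_or]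
    apply Finset.filter_congr
    intro p _
    constructor
    · rintro ⟨hl, hr⟩; omega
    · rintro (h | h) <;> omega
  have hdisj : Disjoint
      ((Finset.Icc (0:ℤ) m1 ×ˢ Finset.Icc (0:ℤ) m2).filter
        (fun p => p.1 + p.2 = θ - 1))
      ((Finset.Icc (0:ℤ) m1 ×ˢ Finset.Icc (0:ℤ) m2).filter
        (fun p => p.1 + p.2 = θ)) := by
    rw [Finset.disjoint_left]
    intro p hp hq
    simp only [Finset.mem_filter] at hp hq
    omega
  rw [hsplit, Finset.card_union_of_disjoint hdisj]
  push_cast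
  rw [lineCard m1 m2 (θ - 1), lineCard m1 m2 θ]
  omega
end

section
/- The set Z^B of all B-column matrices with columns drawn from Z = {(z1,z2) : 0 ≤ z1 ≤ m1, 0 ≤ z2 ≤ m2, θ−1 ≤ z1+z2 ≤ θ} is a fooling set for the B-fold product of the sum-threshold function Π_θ(x1,x2) = 1 iff x1+x2 ≥ θ. That is, for any two distinct matrices M1, M2 in Z^B with (componentwise) equal function values, either swapping the first rows or swapping the second rows changes the value of the function block. -/
/-- The set `Z^B` of matrices whose columns lie in
`Z = {(z1,z2) : 0 ≤ z1 ≤ m1, 0 ≤ z2 ≤ m2, θ-1 ≤ z1+z2 ≤ θ}` is a fooling set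
for the B-fold product of the sum-threshold function `Π_θ(x1,x2) = [x1+x2 ≥ θ]`. -/
theorem stmt4 (m1 m2 θ : ℤ) (B : ℕ) (x1 y1 x2 y2 : Fin B → ℤ)
    (hZ1 : ∀ i, 0 ≤ x1 i ∧ x1 i ≤ m1 ∧ 0 ≤ y1 i ∧ y1 i ≤ m2 ∧
      θ - 1 ≤ x1 i + y1 i ∧ x1 i + y1 i ≤ θ)
    (hZ2 : ∀ i, 0 ≤ x2 i ∧ x2 i ≤ m1 ∧ 0 ≤ y2 i ∧ y2 i ≤ m2 ∧
      θ - 1 ≤ x2 i + y2 i ∧ x2 i + y2 i ≤ θ)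
    (hne : (x1, y1) ≠ (x2, y2))
    (heq : ∀ i, (θ ≤ x1 i + y1 i) ↔ (θ ≤ x2 i + y2 i)) :
    (∃ i, ¬ ((θ ≤ x1 i + y2 i) ↔ (θ ≤ x1 i + y1 i))) ∨
    (∃ i, ¬ ((θ ≤ x2 i + y1 i) ↔ (θ ≤ x1 i + y1 i))) := by
  -- find a coordinate where the pairs differ
  have hdiff : ∃ i, x1 i ≠ x2 i ∨ y1 i ≠ y2 i := by
    by_contra h
    push_neg at h
    apply hne
    have hx : x1 = x2 := funext fun i => (h i).1
    have hy : y1 = y2 := funext fun i => (h i).2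
    rw [hx, hy]
  obtain ⟨i, hi⟩ := hdiff
  obtain ⟨_, _, _, _, h1lo, h1hi⟩ := hZ1 i
  obtain ⟨_, _, _, _, h2lo, h2hi⟩ := hZ2 i
  -- sums at i are equal
  have hsum : x1 i + y1 i = x2 i + y2 i := by
    rcases le_or_gt θ (x1 i + y1 i) with h | h
    · have h2 := (heq i).mp h
      omega
    · have h2 : ¬ θ ≤ x2 i + y2 i := fun hh => absurd ((heq i).mpr hh) (not_le.mpr h)
      omega
  have hx : x1 i ≠ x2 i := by omega
  rcases lt_or_gt_of_ne hx with hlt | hgt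
  · -- x1 i < x2 i, so y1 i > y2 i
    rcases le_or_gt θ (x1 i + y1 i) with h | h
    · -- value θ: x1 i + y2 i < θ
      left; exact ⟨i, by omega⟩
    · -- value θ-1: x2 i + y1 i ≥ θ
      right; exact ⟨i, by omega⟩
  · rcases le_or_gt θ (x1 i + y1 i) with h | h
    · -- value θ: x2 i + y1 i < θ
      right; exact ⟨i, by omega⟩
    · -- value θ-1: x1 i + y2 i ≥ θ
      left; exact ⟨i, by omega⟩
end

section
/- Let l: S → ℕ be codeword lengths on a finite alphabet S satisfying the Kraft inequality Σ_{s∈S} 2^{−l(s)} ≤ 1. Then there exists a prefix-free binary code c: S → {0,1}* with |c(s)| = l(s) for all s. -/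
/-!
Order the symbols so that the lengths `L i` increase, and give symbol `i` the first `L i` binary
digits of the cumulative sum `∑_{j < i} 2^{-L j}`, i.e. the `L i`-bit expansion of the integer
`offset L i = ∑_{j < i} 2^{L i - L j}`. The Kraft inequality makes `offset L i < 2 ^ L i`, so this
word exists. If the word of `i` were a prefix of the word of `j`, then `offset L i` would be
`offset L j` with its last `L j - L i` digits removed; but for `i < j` the offsets satisfy
`2^{L j - L i} (offset L i + 1) ≤ offset L j`, which rules this out.
-/

open Finset

namespace Kraft

/-- The `m`-bit binary expansion of `k % 2 ^ m`, most significant bit first. -/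
def bits : ℕ → ℕ → List Bool
  | 0, _ => []
  | m + 1, k => bits m (k / 2) ++ [decide (k % 2 = 1)]

@[simp]
lemma length_bits (m k : ℕ) : (bits m k).length = m := by
  induction m generalizing k with
  | zero => rfl
  | succ m ih => simp [bits, ih]

lemma bits_add (m d k : ℕ) : bits (m + d) k = bits m (k / 2 ^ d) ++ bits d k := by
  induction d generalizing k with
  | zero => simp [bits]
  | succ d ih =>
    rw [← add_assoc, bits, ih, bits, List.append_assoc, Nat.div_div_eq_div_mul, ← pow_succ']

lemma eq_of_bits_eq {m k k' : ℕ} (hk : k < 2 ^ m) (hk' : k' < 2 ^ m)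
    (h : bits m k = bits m k') : k = k' := by
  induction m generalizing k k' with
  | zero => simp_all
  | succ m ih =>
    obtain ⟨hdiv, hmod⟩ := List.append_inj h (by simp)
    have : k / 2 = k' / 2 := ih (by omega) (by omega) hdiv
    simp only [List.cons.injEq, decide_eq_decide, and_true] at hmod
    omega

lemma eq_div_of_bits_prefix {m m' k k' : ℕ} (hk : k < 2 ^ m) (hk' : k' < 2 ^ m')
    (h : bits m k <+: bits m' k') : k = k' / 2 ^ (m' - m) := by
  obtain ⟨d, rfl⟩ := Nat.exists_eq_add_of_le (by simpa using h.length_le)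
  rw [bits_add] at h
  rw [Nat.add_sub_cancel_left]
  have hpre := List.prefix_of_prefix_length_le h (List.prefix_append _ _) (by simp)
  refine eq_of_bits_eq hk ?_ (hpre.eq_of_length (by simp))
  rw [Nat.div_lt_iff_lt_mul (by positivity), ← pow_add]
  exact hk'

def IsPrefixFree {ι α : Type*} (c : ι → List α) : Prop :=
  ∀ i j, i ≠ j → ¬ c i <+: c j

lemma sum_two_pow_sub_le_of_kraft {ι : Type*} (s : Finset ι) (L : ι → ℕ) {m : ℕ}
    (hm : ∀ j ∈ s, L j ≤ m) (hK : ∑ j ∈ s, (2 : ℝ) ^ (-(L j : ℤ)) ≤ 1) :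
    ∑ j ∈ s, 2 ^ (m - L j) ≤ 2 ^ m := by
  have hterm : ∀ j ∈ s, ((2 ^ (m - L j) : ℕ) : ℝ) = 2 ^ m * (2 : ℝ) ^ (-(L j : ℤ)) := by
    intro j hj
    rw [Nat.cast_pow, Nat.cast_ofNat, ← zpow_natCast, ← zpow_natCast, ← zpow_add₀ two_ne_zero,
      Nat.cast_sub (hm j hj)]
    ring_nf
  have : (∑ j ∈ s, 2 ^ (m - L j) : ℕ) ≤ (2 ^ m : ℝ) := by
    rw [Nat.cast_sum, sum_congr rfl hterm, ← mul_sum]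
    exact mul_le_of_le_one_right (by positivity) hK
  exact_mod_cast this

variable {ι : Type*} [LinearOrder ι] [LocallyFiniteOrderBot ι] {L : ι → ℕ}

def offset (L : ι → ℕ) (i : ι) : ℕ := ∑ j ∈ Iio i, 2 ^ (L i - L j)

lemma offset_add_one (i : ι) :
    offset L i + 1 = ∑ j ∈ Iic i, 2 ^ (L i - L j) := by
  classical
  rw [← Iio_insert, sum_insert (by simp), offset, Nat.sub_self, pow_zero, add_comm]

lemma offset_lt [Fintype ι] (hL : Monotone L) (hK : ∑ i, (2 : ℝ) ^ (-(L i : ℤ)) ≤ 1) (i : ι) :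
    offset L i < 2 ^ L i := by
  rw [Nat.lt_iff_add_one_le, offset_add_one]
  exact sum_two_pow_sub_le_of_kraft _ _ (fun j hj => hL (mem_Iic.mp hj))
    ((sum_le_univ_sum_of_nonneg fun _ => by positivity).trans hK)

lemma two_pow_sub_mul_offset_add_one_le (hL : Monotone L) {i j : ι} (hij : i < j) :
    2 ^ (L j - L i) * (offset L i + 1) ≤ offset L j := by
  rw [offset_add_one, mul_sum]
  calc ∑ k ∈ Iic i, 2 ^ (L j - L i) * 2 ^ (L i - L k)
      = ∑ k ∈ Iic i, 2 ^ (L j - L k) := by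
        refine sum_congr rfl fun k hk => ?_
        have hki := hL (mem_Iic.mp hk)
        have hij' := hL hij.le
        rw [← pow_add]
        congr 1
        omega
    _ ≤ offset L j := sum_le_sum_of_subset fun k hk => mem_Iio.mpr ((mem_Iic.mp hk).trans_lt hij)

theorem exists_prefixFree_of_monotone [Fintype ι] (hL : Monotone L)
    (hK : ∑ i, (2 : ℝ) ^ (-(L i : ℤ)) ≤ 1) :
    ∃ c : ι → List Bool, (∀ i, (c i).length = L i) ∧ IsPrefixFree c := by
  refine ⟨fun i => bits (L i) (offset L i), fun i => length_bits _ _, fun i j hij hpre => ?_⟩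
  have hdiv := eq_div_of_bits_prefix (offset_lt hL hK i) (offset_lt hL hK j) hpre
  rcases hij.lt_or_gt with hij | hji
  · have hstep := two_pow_sub_mul_offset_add_one_le hL hij
    have hle : offset L i + 1 ≤ offset L j / 2 ^ (L j - L i) :=
      (Nat.le_div_iff_mul_le (by positivity)).mpr (by linarith)
    omega
  · have hL_eq : L i = L j := le_antisymm (by simpa using hpre.length_le) (hL hji.le)
    have hstep := two_pow_sub_mul_offset_add_one_le hL hji
    simp only [hL_eq, Nat.sub_self, pow_zero, one_mul, Nat.div_one] at hstep hdiv
    omega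

end Kraft

/-- Converse of Kraft's inequality: lengths satisfying the Kraft inequality are
achieved by some prefix-free binary code. -/
theorem stmt8 {S : Type*} [Fintype S] (l : S → ℕ)
    (hK : ∑ s : S, (2 : ℝ) ^ (-(l s : ℤ)) ≤ 1) :
    ∃ c : S → List Bool, (∀ s, (c s).length = l s) ∧
      ∀ s t : S, s ≠ t → ¬ (c s <+: c t) := by
  let e₀ := (Fintype.equivFin S).symm
  let e := (Tuple.sort (l ∘ e₀)).trans e₀
  obtain ⟨c, hlen, hc⟩ := Kraft.exists_prefixFree_of_monotone (L := l ∘ e)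
    (Tuple.monotone_sort (l ∘ e₀)) ((e.sum_comp fun s => (2 : ℝ) ^ (-(l s : ℤ))).trans_le hK)
  exact ⟨c ∘ e.symm, fun s => by simp [hlen], fun s t hst => hc _ _ (e.symm.injective.ne hst)⟩
end

section
/- For integers a ≤ b and m1 ≤ m2 with b ≤ (m1+m2)/2, the number of pairs (z1,z2) with 0 ≤ z1 ≤ m1, 0 ≤ z2 ≤ m2, and z1+z2 ∈ {a−1, b, b+1} is at least min(2b−a+3, m1+1). -/
private lemma slice_card (s : ℤ) (hs : 0 ≤ s) (t : ℤ) :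
    (((Finset.Icc (0:ℤ) s).image (fun z => (z, t - z))).card : ℤ) = s + 1 := by
  rw [Finset.card_image_of_injective _ (fun x y hxy => (Prod.ext_iff.mp hxy).1)]
  rw [Int.card_Icc]
  omega

theorem stmt11 (m1 m2 a b : ℤ) (ha : 1 ≤ a) (hab : a ≤ b) (hm : m1 ≤ m2)
    (hb : 2 * b ≤ m1 + m2) :
    min (2 * b - a + 3) (m1 + 1) ≤
    (((Finset.Icc (0:ℤ) m1 ×ˢ Finset.Icc (0:ℤ) m2).filter
      (fun p => p.1 + p.2 = a - 1 ∨ p.1 + p.2 = b ∨ p.1 + p.2 = b + 1)).card : ℤ) := by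
  set F := ((Finset.Icc (0:ℤ) m1 ×ˢ Finset.Icc (0:ℤ) m2).filter
      (fun p => p.1 + p.2 = a - 1 ∨ p.1 + p.2 = b ∨ p.1 + p.2 = b + 1)) with hF
  rcases lt_or_ge m1 0 with hneg | hm1
  · have : min (2 * b - a + 3) (m1 + 1) ≤ 0 := by omega
    exact this.trans (by positivity)
  rcases le_or_gt m1 b with h | h
  · -- one slice of sum b, length m1+1, suffices
    set T := (Finset.Icc (0:ℤ) m1).image (fun z => (z, b - z)) with hT
    have hsub : T ⊆ F := by
      intro p hp
      simp only [hT, Finset.mem_image, Finset.mem_Icc] at hp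
      obtain ⟨z, ⟨hz0, hz1⟩, rfl⟩ := hp
      simp only [hF, Finset.mem_filter, Finset.mem_product, Finset.mem_Icc]
      exact ⟨⟨⟨hz0, hz1⟩, by omega, by omega⟩, Or.inr (Or.inl (by ring))⟩
    have hcard : (T.card : ℤ) = m1 + 1 := slice_card m1 hm1 b
    have := Finset.card_le_card hsub
    have : (T.card : ℤ) ≤ (F.card : ℤ) := by exact_mod_cast this
    omega
  · -- three slices: sums a-1, b, b+1
    set T1 := (Finset.Icc (0:ℤ) (a-1)).image (fun z => (z, a - 1 - z)) with hT1
    set T2 := (Finset.Icc (0:ℤ) b).image (fun z => (z, b - z)) with hT2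
    set T3 := (Finset.Icc (0:ℤ) (b+1)).image (fun z => (z, b + 1 - z)) with hT3
    have hsum1 : ∀ p ∈ T1, p.1 + p.2 = a - 1 := by
      intro p hp
      simp only [hT1, Finset.mem_image] at hp
      obtain ⟨z, _, rfl⟩ := hp; ring
    have hsum2 : ∀ p ∈ T2, p.1 + p.2 = b := by
      intro p hp
      simp only [hT2, Finset.mem_image] at hp
      obtain ⟨z, _, rfl⟩ := hp; ring
    have hsum3 : ∀ p ∈ T3, p.1 + p.2 = b + 1 := by
      intro p hp
      simp only [hT3, Finset.mem_image] at hp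
      obtain ⟨z, _, rfl⟩ := hp; ring
    have hsub : T1 ∪ T2 ∪ T3 ⊆ F := by
      intro p hp
      simp only [Finset.mem_union] at hp
      have hmem : ∀ s : ℤ, 0 ≤ s → s ≤ m1 → s ≤ m2 →
          p ∈ (Finset.Icc (0:ℤ) s).image (fun z => (z, s - z)) →
          p.1 ∈ Finset.Icc (0:ℤ) m1 ∧ p.2 ∈ Finset.Icc (0:ℤ) m2 := by
        intro s h0 h1 h2 hp
        simp only [Finset.mem_image, Finset.mem_Icc] at hp
        obtain ⟨z, ⟨hz0, hz1⟩, rfl⟩ := hp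
        simp only [Finset.mem_Icc]
        exact ⟨⟨hz0, by omega⟩, by constructor <;> omega⟩
      simp only [hF, Finset.mem_filter, Finset.mem_product]
      rcases hp with (hp | hp) | hp
      · exact ⟨hmem (a-1) (by omega) (by omega) (by omega) hp, Or.inl (hsum1 p hp)⟩
      · exact ⟨hmem b (by omega) (by omega) (by omega) hp, Or.inr (Or.inl (hsum2 p hp))⟩
      · exact ⟨hmem (b+1) (by omega) (by omega) (by omega) hp, Or.inr (Or.inr (hsum3 p hp))⟩
    have hd12 : Disjoint T1 T2 := by
      rw [Finset.disjoint_left]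
      intro p h1 h2
      have := hsum1 p h1; have := hsum2 p h2; omega
    have hd13 : Disjoint (T1 ∪ T2) T3 := by
      rw [Finset.disjoint_left]
      intro p h1 h3
      have h3' := hsum3 p h3
      rcases Finset.mem_union.mp h1 with h | h
      · have := hsum1 p h; omega
      · have := hsum2 p h; omega
    have hcard : ((T1 ∪ T2 ∪ T3).card : ℤ) = 2 * b + a + 3 := by
      rw [Finset.card_union_of_disjoint hd13, Finset.card_union_of_disjoint hd12]
      push_cast
      rw [slice_card (a-1) (by omega) (a-1), slice_card b (by omega) b,
        slice_card (b+1) (by omega) (b+1)]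
      ring
    have := Finset.card_le_card hsub
    have : ((T1 ∪ T2 ∪ T3).card : ℤ) ≤ (F.card : ℤ) := by exact_mod_cast this
    omega
end
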